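/- arXiv:2003.01559 — 9 statements merged into one kernel-verified Lean document; each statement's English description precedes it below -/
import Mathlib

section
/- Let p, q, w_0, w_1 be integers and let (w_n)_{n≥0} be the binary recurrence defined by w_{n+2} = p·w_{n+1} + q·w_n for all n ≥ 0. If p ≡ 2 (mod 4), q ≡ 3 (mod 4), and w_0 + w_1 is odd, then for every integer k ≥ 1 the terms w_0, w_1, …, w_{2^k − 1} are pairwise incongruent modulo 2^k; consequently the discriminator satisfies D_w(2^k) = 2^k for every k ≥ 1. -/
/-!
Put `v_c n = w (n + c) - w n`; it solves the same recurrence as `w`. By induction on `k`,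
`v_(2^k) n ≡ 2^k (mod 2^(k+1))` for all `n`: for `k ≤ 1` this is parity bookkeeping, and the
step writes `v_(2^(k+1)) n = v_(2^k) (n + 2^k) + v_(2^k) n` and uses that, because
`p ≡ 2` and `q ≡ 3 (mod 4)`, the recurrence forces `v_(2^k) (n + 2) ≡ 2^(k+1) - v_(2^k) n`
modulo `2^(k+2)`. Hence `w i` modulo `2^(k+1)` determines `i` modulo `2^k` and, on top of it,
the bit of weight `2^k` of `i`.
-/

/-- The discriminator of a sequence `w`: the smallest positive integer `m` such that
`w 0, …, w (n-1)` are pairwise incongruent modulo `m`. -/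
noncomputable def discriminator (w : ℕ → ℤ) (n : ℕ) : ℕ :=
  sInf {m : ℕ | 0 < m ∧ ∀ i < n, ∀ j < n, w i ≡ w j [ZMOD (m : ℤ)] → i = j}

lemma le_of_forall_modEq_imp_eq {w : ℕ → ℤ} {n m : ℕ} (hm : 0 < m)
    (h : ∀ i < n, ∀ j < n, w i ≡ w j [ZMOD (m : ℤ)] → i = j) : n ≤ m := by
  have : NeZero m := ⟨hm.ne'⟩
  have hinj : Function.Injective (fun i : Fin n => (w i : ZMod m)) := fun i j hij =>
    Fin.ext (h i i.isLt j j.isLt ((ZMod.intCast_eq_intCast_iff _ _ _).mp hij))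
  simpa using Fintype.card_le_of_injective _ hinj

lemma discriminator_eq_self {w : ℕ → ℤ} {n : ℕ} (hn : 0 < n)
    (h : ∀ i < n, ∀ j < n, w i ≡ w j [ZMOD (n : ℤ)] → i = j) : discriminator w n = n :=
  le_antisymm (Nat.sInf_le ⟨hn, h⟩)
    (le_csInf ⟨n, hn, h⟩ fun _ hm => le_of_forall_modEq_imp_eq hm.1 hm.2)

section BinaryRecurrence

variable {p q : ℤ}

lemma sub_shift_rec {w : ℕ → ℤ} (hrec : ∀ n, w (n + 2) = p * w (n + 1) + q * w n) (c n : ℕ) :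
    w (n + 2 + c) - w (n + 2) = p * (w (n + 1 + c) - w (n + 1)) + q * (w (n + c) - w n) := by
  rw [show n + 2 + c = n + c + 2 by omega, show n + 1 + c = n + c + 1 by omega, hrec, hrec]
  ring

lemma odd_add_succ {w : ℕ → ℤ} (hrec : ∀ n, w (n + 2) = p * w (n + 1) + q * w n)
    (hp : Even p) (hq : Odd q) (hodd : Odd (w 0 + w 1)) (n : ℕ) : Odd (w (n + 1) + w n) := by
  induction n with
  | zero => rwa [add_comm]
  | succ n ih =>
    rw [hrec, show p * w (n + 1) + q * w n + w (n + 1)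
      = p * w (n + 1) + (q - 1) * w n + (w (n + 1) + w n) by ring]
    exact ((hp.mul_right _).add ((hq.sub_odd odd_one).mul_right _)).add_odd ih

lemma add_two_sub_modEq_four {w : ℕ → ℤ} (hrec : ∀ n, w (n + 2) = p * w (n + 1) + q * w n)
    (hp : p % 4 = 2) (hq : q % 4 = 3) (hodd : Odd (w 0 + w 1)) (n : ℕ) :
    w (n + 2) - w n ≡ 2 [ZMOD 4] := by
  obtain ⟨a, rfl⟩ : ∃ a, p = 4 * a + 2 := ⟨p / 4, by omega⟩
  obtain ⟨b, rfl⟩ : ∃ b, q = 4 * b + 3 := ⟨q / 4, by omega⟩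
  obtain ⟨r, hr⟩ := odd_add_succ hrec ⟨2 * a + 1, by ring⟩ ⟨2 * b + 1, by ring⟩ hodd n
  rw [Int.modEq_iff_dvd, hrec]
  exact ⟨-(a * w (n + 1) + b * w n + r), by linear_combination -2 * hr⟩

/-- Modulo `4 m`, `v (n + 2 t)` is `v n` or `2 m - v n`, and `2 v n ≡ 2 m`. -/
lemma add_two_mul_add_modEq {v : ℕ → ℤ} (hrec : ∀ n, v (n + 2) = p * v (n + 1) + q * v n)
    (hp : p % 4 = 2) (hq : q % 4 = 3) {m : ℤ} (hv : ∀ n, v n ≡ m [ZMOD 2 * m]) (t n : ℕ) :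
    v (n + 2 * t) + v n ≡ 2 * m [ZMOD 4 * m] := by
  obtain ⟨a, rfl⟩ : ∃ a, p = 4 * a + 2 := ⟨p / 4, by omega⟩
  obtain ⟨b, rfl⟩ : ∃ b, q = 4 * b + 3 := ⟨q / 4, by omega⟩
  have two_mul_modEq (n : ℕ) : v n + v n ≡ 2 * m [ZMOD 4 * m] := by
    convert (hv n).mul_left' (c := 2) using 1 <;> ring
  have add_two_add_modEq (n : ℕ) : v (n + 2) + v n ≡ 2 * m [ZMOD 4 * m] := by
    obtain ⟨s, hs⟩ := (hv (n + 1)).symm.dvd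
    obtain ⟨u, hu⟩ := (hv n).symm.dvd
    rw [Int.modEq_iff_dvd, hrec]
    exact ⟨-(a + b + 1 + (2 * a + 1) * s + 2 * (b + 1) * u), by
      linear_combination (-(4 * a + 2)) * hs - (4 * b + 4) * hu⟩
  induction t with
  | zero => simpa using two_mul_modEq n
  | succ t ih =>
    have := ((add_two_add_modEq (n + 2 * t)).sub ih).add (two_mul_modEq n)
    rw [show n + 2 * (t + 1) = n + 2 * t + 2 by ring]
    convert this using 1 <;> ring

lemma add_two_pow_sub_modEq {w : ℕ → ℤ} (hrec : ∀ n, w (n + 2) = p * w (n + 1) + q * w n)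
    (hp : p % 4 = 2) (hq : q % 4 = 3) (hodd : Odd (w 0 + w 1)) (k n : ℕ) :
    w (n + 2 ^ k) - w n ≡ 2 ^ k [ZMOD 2 ^ (k + 1)] := by
  rcases k with _ | k
  · obtain ⟨r, hr⟩ := odd_add_succ hrec ⟨p / 2, by omega⟩ ⟨q / 2, by omega⟩ hodd n
    rw [pow_zero, zero_add, pow_one, Int.modEq_iff_dvd]
    exact ⟨w n - r, by linear_combination -hr⟩
  induction k generalizing n with
  | zero => simpa using add_two_sub_modEq_four hrec hp hq hodd n
  | succ k ih =>
    have hv (n : ℕ) : w (n + 2 ^ (k + 1)) - w n ≡ 2 ^ (k + 1) [ZMOD 2 * 2 ^ (k + 1)] := by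
      rw [← pow_succ']; exact ih n
    have := add_two_mul_add_modEq (sub_shift_rec hrec _) hp hq hv (2 ^ k) n
    rw [← pow_succ'] at this
    rw [pow_succ 2 (k + 1), mul_two, ← add_assoc]
    convert this using 1 <;> ring

lemma add_mul_two_pow_sub_modEq {w : ℕ → ℤ} (hrec : ∀ n, w (n + 2) = p * w (n + 1) + q * w n)
    (hp : p % 4 = 2) (hq : q % 4 = 3) (hodd : Odd (w 0 + w 1)) (k a n : ℕ) :
    w (n + a * 2 ^ k) - w n ≡ a * 2 ^ k [ZMOD 2 ^ (k + 1)] := by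
  induction a with
  | zero => simp [Int.ModEq.refl]
  | succ a ih =>
    have := (add_two_pow_sub_modEq hrec hp hq hodd k (n + a * 2 ^ k)).add ih
    rw [show n + (a + 1) * 2 ^ k = n + a * 2 ^ k + 2 ^ k by ring]
    convert this using 1 <;> push_cast <;> ring

lemma modEq_of_modEq_two_pow {w : ℕ → ℤ} (hrec : ∀ n, w (n + 2) = p * w (n + 1) + q * w n)
    (hp : p % 4 = 2) (hq : q % 4 = 3) (hodd : Odd (w 0 + w 1)) (k : ℕ) {i j : ℕ}
    (h : w i ≡ w j [ZMOD 2 ^ k]) : i ≡ j [MOD 2 ^ k] := by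
  induction k generalizing i j with
  | zero => exact Nat.modEq_one
  | succ k ih =>
    have hlow : i % 2 ^ k = j % 2 ^ k := ih (h.of_mul_right 2)
    have hi := add_mul_two_pow_sub_modEq hrec hp hq hodd k (i / 2 ^ k) (i % 2 ^ k)
    have hj := add_mul_two_pow_sub_modEq hrec hp hq hodd k (j / 2 ^ k) (j % 2 ^ k)
    rw [Nat.mod_add_div'] at hi
    rw [Nat.mod_add_div', ← hlow] at hj
    have hhigh : ((i / 2 ^ k : ℕ) : ℤ) * 2 ^ k ≡ (j / 2 ^ k : ℕ) * 2 ^ k [ZMOD 2 * 2 ^ k] := by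
      rw [← pow_succ']
      exact hi.symm.trans ((h.sub_right _).trans hj)
    have hhigh' := Int.natCast_modEq_iff.mp (Int.ModEq.mul_right_cancel' (by positivity) hhigh)
    rw [Nat.ModEq, pow_succ, Nat.mod_mul, Nat.mod_mul, hlow, hhigh']

end BinaryRecurrence

/-- If `p ≡ 2 (mod 4)`, `q ≡ 3 (mod 4)` and `w 0 + w 1` is odd, then for
every `k ≥ 1` the terms `w 0, …, w (2^k - 1)` are pairwise incongruent modulo `2^k`, and
consequently the discriminator satisfies `D_w(2^k) = 2^k`. -/
theorem stmt1 (p q : ℤ) (w : ℕ → ℤ)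
    (hrec : ∀ n : ℕ, w (n + 2) = p * w (n + 1) + q * w n)
    (hp : p % 4 = 2) (hq : q % 4 = 3) (hodd : Odd (w 0 + w 1)) :
    ∀ k : ℕ, 1 ≤ k →
      (∀ i < 2 ^ k, ∀ j < 2 ^ k, w i ≡ w j [ZMOD (2 ^ k : ℤ)] → i = j) ∧
      discriminator w (2 ^ k) = 2 ^ k := by
  intro k _
  have hinj : ∀ i < 2 ^ k, ∀ j < 2 ^ k, w i ≡ w j [ZMOD (2 ^ k : ℤ)] → i = j :=
    fun i hi j hj hij => (modEq_of_modEq_two_pow hrec hp hq hodd k hij).eq_of_lt_of_lt hi hj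
  exact ⟨hinj, discriminator_eq_self (by positivity) (by exact_mod_cast hinj)⟩
end

section
/- Let p, q, w_0, w_1 be integers and let (w_n)_{n≥0} be the binary recurrence defined by w_{n+2} = p·w_{n+1} + q·w_n for all n ≥ 0. If (p mod 4, q mod 4) ≠ (2, 3), then for every integer k ≥ 3 the number of distinct residue classes in {w_n mod 2^k : 0 ≤ n ≤ 2^k − 1} is strictly less than 2^k. -/
/-!
If the first `2^k` terms hit every residue modulo `2^k`, then every residue class modulo `2`
is hit by at least `2^(k-1)` of them, and every residue class modulo `4` by at least one.
Reducing the recurrence modulo `2` or `4` rules this out: if `q` is even, all terms from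
some index on have the same parity; if `p` and `q` are odd, the parities are `3`-periodic
with pattern `(x, y, x + y)`, so one parity occurs only at indices in a single class
modulo `3`; if `p` is even and `q` odd, the sequence is `4`-periodic modulo `4` and, unless
`(p, q) ≡ (2, 3)`, misses a residue modulo `4`.
-/

open Finset

namespace ZMod

theorem card_filter_castHom_eq {m n : ℕ} [NeZero n] (h : m ∣ n) (a : ZMod m) :
    #{z : ZMod n | castHom h (ZMod m) z = a} = n / m := by
  have : NeZero m := ⟨fun hm => NeZero.ne n (Nat.eq_zero_of_zero_dvd (hm ▸ h))⟩
  have hfiber (b : ZMod m) : #{z : ZMod n | castHom h (ZMod m) z = b} =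
      #{z : ZMod n | castHom h (ZMod m) z = a} :=
    AddMonoidHom.card_fiber_eq_of_mem_range _ (castHom_surjective h b) (castHom_surjective h a)
  have hsum := card_eq_sum_card_fiberwise (f := castHom h (ZMod m)) (s := univ) (t := univ)
    fun _ _ => mem_coe.2 (mem_univ _)
  simp only [hfiber, sum_const, card_univ, ZMod.card, smul_eq_mul] at hsum
  exact (Nat.div_eq_of_eq_mul_right (Nat.pos_of_neZero m) hsum).symm

theorem periodic_three_of_recurrence {v : ℕ → ZMod 2}
    (hv : ∀ n, v (n + 2) = v (n + 1) + v n) : Function.Periodic v 3 := fun n => by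
  rw [hv, hv n, add_right_comm, CharTwo.add_self_eq_zero, zero_add]

theorem exists_forall_eq_imp_mod_three_eq {v : ℕ → ZMod 2}
    (hv : ∀ n, v (n + 2) = v (n + 1) + v n) : ∃ a c, ∀ n, v n = a → n % 3 = c := by
  have hminority : ∀ x y : ZMod 2, ∃ a c, ∀ i : Fin 3, ![x, y, x + y] i = a → i = c := by
    decide
  obtain ⟨a, c, hc⟩ := hminority (v 0) (v 1)
  have hvi (i : Fin 3) : v i = ![v 0, v 1, v 0 + v 1] i := by
    fin_cases i <;> simp [hv 0, add_comm]
  refine ⟨a, c, fun n hn => ?_⟩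
  have hmod := hc ⟨n % 3, Nat.mod_lt _ three_pos⟩
  rw [← hvi, Fin.ext_iff] at hmod
  exact hmod (((periodic_three_of_recurrence hv).map_mod_nat n).trans hn)

theorem exists_forall_ne_of_recurrence_of_even_of_odd {P Q : ZMod 4} {v : ℕ → ZMod 4}
    (hv : ∀ n, v (n + 2) = P * v (n + 1) + Q * v n) (hP : Even P) (hQ : Odd Q)
    (hPQ : (P, Q) ≠ (2, 3)) : ∃ a, ∀ n, v n ≠ a := by
  obtain ⟨r, rfl⟩ := hP
  obtain ⟨s, rfl⟩ := hQ
  have hper : Function.Periodic v 4 := fun n => by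
    change v (n + 2 + 2) = v n
    rw [hv (n + 2), hv (n + 1), hv n]
    generalize v n = x, v (n + 1) = y
    clear hv hPQ
    revert r s x y
    decide
  -- `v 2 ≡ v 0` and `v 3 ≡ v 1` mod 2; both pairs are distinct mod 4 only if `P = 2`, `Q = 3`.
  obtain ⟨a, ha⟩ : ∃ a, a ≠ v 0 ∧ a ≠ v 1 ∧ a ≠ v 2 ∧ a ≠ v 3 := by
    rw [hv 1, hv 0]
    generalize v 0 = x, v 1 = y
    clear hv hper
    revert r s x y
    decide
  refine ⟨a, fun n hn => ?_⟩
  rw [← hper.map_mod_nat] at hn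
  have : n % 4 < 4 := Nat.mod_lt _ four_pos
  interval_cases n % 4 <;> tauto

end ZMod

theorem le_card_filter_intCast_eq {ι : Type*} {n m : ℕ} [NeZero n] (h : m ∣ n) {s : Finset ι}
    {f : ι → ℤ} (hs : s.image (fun i => (f i : ZMod n)) = univ) (a : ZMod m) :
    n / m ≤ #{i ∈ s | (f i : ZMod m) = a} := by
  rw [← ZMod.card_filter_castHom_eq h a]
  refine card_le_card_of_surjOn (fun i => (f i : ZMod n)) fun z hz => ?_
  obtain ⟨i, hi, rfl⟩ := mem_image.1 (hs ▸ mem_univ z)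
  refine ⟨i, ?_, rfl⟩
  simp only [coe_filter, mem_univ, true_and, Set.mem_ofPred_eq] at hz ⊢
  exact ⟨hi, by rwa [map_intCast] at hz⟩

theorem card_filter_range_le_of_forall_ne {α : Type*} [DecidableEq α] {v : ℕ → α} {a : α}
    {j : ℕ} (h : ∀ n, j ≤ n → v n ≠ a) (N : ℕ) : #{n ∈ range N | v n = a} ≤ j := by
  refine (card_le_card fun n hn => mem_range.2 ?_).trans (card_range j).le
  by_contra! hjn
  exact h n hjn (mem_filter.1 hn).2

theorem card_filter_range_mod_eq_le (N r c : ℕ) : #{n ∈ range N | n % r = c} ≤ N / r + 1 := by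
  rw [← card_range (N / r + 1)]
  refine card_le_card_of_injOn (· / r) (fun n hn => ?_) fun n₁ hn₁ n₂ hn₂ hdiv => ?_
  · simp only [coe_filter, mem_range, Set.mem_ofPred_eq] at hn
    simpa [Nat.lt_succ_iff] using Nat.div_le_div_right hn.1.le
  · simp only [coe_filter, mem_range, Set.mem_ofPred_eq] at hn₁ hn₂
    rw [← Nat.div_add_mod n₁ r, ← Nat.div_add_mod n₂ r, hn₁.2, hn₂.2]
    exact congrArg (r * · + c) hdiv

theorem intCast_recurrence {R : Type*} [Ring R] {p q : ℤ} {w : ℕ → ℤ}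
    (hrec : ∀ n, w (n + 2) = p * w (n + 1) + q * w n) (n : ℕ) :
    (w (n + 2) : R) = p * w (n + 1) + q * w n := by
  simp [hrec]

theorem apply_succ_eq_apply_one {α : Type*} {v : ℕ → α} (hv : ∀ n, v (n + 2) = v (n + 1))
    (n : ℕ) : v (n + 1) = v 1 := by
  induction n with
  | zero => rfl
  | succ n ih => rw [hv, ih]

theorem intCast_pair_ne_of_emod_four_ne {p q : ℤ} (hpq : (p % 4, q % 4) ≠ (2, 3)) :
    ((p : ZMod 4), (q : ZMod 4)) ≠ (2, 3) := by
  intro h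
  obtain ⟨hp, hq⟩ := Prod.mk.inj h
  have hp4 := (ZMod.intCast_eq_intCast_iff' p 2 4).1 (by exact_mod_cast hp)
  have hq4 := (ZMod.intCast_eq_intCast_iff' q 3 4).1 (by exact_mod_cast hq)
  norm_num at hp4 hq4
  exact hpq (by rw [hp4, hq4])

theorem exists_forall_intCast_ne_of_even {p q : ℤ} {w : ℕ → ℤ}
    (hrec : ∀ n, w (n + 2) = p * w (n + 1) + q * w n) (hq : Even q) :
    ∃ a : ZMod 2, ∀ n, 2 ≤ n → (w n : ZMod 2) ≠ a := by
  have hq2 := ZMod.intCast_eq_zero_iff_even.2 hq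
  rcases Int.even_or_odd p with hp | hp
  · refine ⟨1, fun n hn => ?_⟩
    obtain ⟨n, rfl⟩ := Nat.exists_eq_add_of_le' hn
    simp [intCast_recurrence hrec, ZMod.intCast_eq_zero_iff_even.2 hp, hq2]
  · have hconst := apply_succ_eq_apply_one (v := fun n => (w n : ZMod 2)) fun n => by
      rw [intCast_recurrence hrec, ZMod.intCast_eq_one_iff_odd.2 hp, hq2, one_mul, zero_mul,
        add_zero]
    refine ⟨w 1 + 1, fun n hn => ?_⟩
    obtain ⟨n, rfl⟩ := Nat.exists_eq_add_of_le' (one_le_two.trans hn)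
    rw [hconst n]
    exact (by decide : ∀ x : ZMod 2, x ≠ x + 1) _

theorem image_range_two_pow_ne_univ {p q : ℤ} {w : ℕ → ℤ}
    (hrec : ∀ n, w (n + 2) = p * w (n + 1) + q * w n) (hpq : (p % 4, q % 4) ≠ (2, 3))
    {k : ℕ} (hk : 3 ≤ k) : (range (2 ^ k)).image (fun n => (w n : ZMod (2 ^ k))) ≠ univ := by
  intro hu
  have hparity (a : ZMod 2) : 2 ^ k / 2 ≤ #{n ∈ range (2 ^ k) | (w n : ZMod 2) = a} :=
    le_card_filter_intCast_eq (dvd_pow_self 2 (by omega)) hu a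
  have hk8 : 2 ^ 3 ≤ 2 ^ k := Nat.pow_le_pow_right two_pos hk
  rcases Int.even_or_odd q with hq | hq
  · obtain ⟨a, ha⟩ := exists_forall_intCast_ne_of_even hrec hq
    have := (hparity a).trans (card_filter_range_le_of_forall_ne ha _)
    omega
  rcases Int.even_or_odd p with hp | hp
  · obtain ⟨a, ha⟩ := ZMod.exists_forall_ne_of_recurrence_of_even_of_odd
      (v := fun n => (w n : ZMod 4)) (intCast_recurrence hrec) hp.intCast hq.intCast
      (intCast_pair_ne_of_emod_four_ne hpq)
    have := le_card_filter_intCast_eq (show 4 ∣ 2 ^ k from pow_dvd_pow 2 (by omega : 2 ≤ k)) hu a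
    rw [filter_false_of_mem fun n _ => ha n, card_empty] at this
    omega
  · obtain ⟨a, c, hac⟩ := ZMod.exists_forall_eq_imp_mod_three_eq (v := fun n => (w n : ZMod 2))
      fun n => by
        rw [intCast_recurrence hrec, ZMod.intCast_eq_one_iff_odd.2 hp,
          ZMod.intCast_eq_one_iff_odd.2 hq, one_mul, one_mul]
    have hsub : #{n ∈ range (2 ^ k) | (w n : ZMod 2) = a} ≤ #{n ∈ range (2 ^ k) | n % 3 = c} :=
      card_le_card fun n hn => by
        simp only [mem_filter] at hn ⊢
        exact ⟨hn.1, hac n hn.2⟩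
    have hk2 : 2 ^ k = 2 * 2 ^ (k - 1) := by rw [← pow_succ']; congr 1; omega
    have := ((hparity a).trans hsub).trans (card_filter_range_mod_eq_le (2 ^ k) 3 c)
    omega

/-- If `(p mod 4, q mod 4) ≠ (2, 3)`, then for every `k ≥ 3` the number of
distinct residues of `w 0, …, w (2^k - 1)` modulo `2^k` is strictly less than `2^k`. -/
theorem stmt2 (p q : ℤ) (w : ℕ → ℤ)
    (hrec : ∀ n : ℕ, w (n + 2) = p * w (n + 1) + q * w n)
    (hpq : (p % 4, q % 4) ≠ (2, 3)) :
    ∀ k : ℕ, 3 ≤ k →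
      ((Finset.range (2 ^ k)).image (fun n => (w n : ZMod (2 ^ k)))).card < 2 ^ k := by
  intro k hk
  refine ((card_le_univ _).trans_eq (ZMod.card _)).lt_of_ne fun hcard => ?_
  exact image_range_two_pow_ne_univ hrec hpq hk
    (eq_univ_of_card _ (hcard.trans (ZMod.card _).symm))
end

section
/- Let p and q be integers and let (u_n)_{n≥0} be the Lucas sequence defined by u_0 = 0, u_1 = 1, and u_{n+2} = p·u_{n+1} + q·u_n for all n ≥ 0. Then for every integer k ≥ 1 the terms u_0, u_1, …, u_{2^k − 1} are pairwise incongruent modulo 2^k if and only if p ≡ 2 (mod 4) and q ≡ 3 (mod 4). -/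
/-- Auxiliary: the Lucas recurrence reduced mod 8, as a function of the
residues `P = p mod 8` and `Q = q mod 8`. -/
def w8 (P Q : ZMod 8) : ℕ → ZMod 8
  | 0 => 0
  | 1 => 1
  | n + 2 => P * w8 P Q (n + 1) + Q * w8 P Q n

/-- Auxiliary: if the first 8 terms of the reduced sequence are pairwise
distinct mod 8, then `P ∈ {2,6}` and `Q ∈ {3,7}` in `ZMod 8`. -/
theorem key8 : ∀ P Q : ZMod 8, (∀ i < 8, ∀ j < 8, w8 P Q i = w8 P Q j → i = j) →
    ((P = 2 ∨ P = 6) ∧ (Q = 3 ∨ Q = 7)) := by decide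

/-- For the Lucas sequence `u` with `u 0 = 0`, `u 1 = 1` and
`u (n+2) = p·u (n+1) + q·u n`, the terms `u 0, …, u (2^k − 1)` are pairwise
incongruent modulo `2^k` for every `k ≥ 1` if and only if `p ≡ 2 (mod 4)` and
`q ≡ 3 (mod 4)`. -/
theorem stmt7 (p q : ℤ) (u : ℕ → ℤ) (h0 : u 0 = 0) (h1 : u 1 = 1)
    (hrec : ∀ n : ℕ, u (n + 2) = p * u (n + 1) + q * u n) :
    (∀ k : ℕ, 1 ≤ k →
        ∀ i < 2 ^ k, ∀ j < 2 ^ k, u i ≡ u j [ZMOD (2 ^ k : ℤ)] → i = j) ↔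
      (p % 4 = 2 ∧ q % 4 = 3) := by
  constructor
  · -- Forward direction: use the case k = 3 and a finite check in ZMod 8.
    intro h
    have h3 := h 3 (by norm_num)
    have cast8 : ∀ n, ((u n : ZMod 8)) = w8 (p : ZMod 8) (q : ZMod 8) n := by
      intro n
      induction n using Nat.strong_induction_on with
      | _ n ih =>
        match n with
        | 0 => simp [h0, w8]
        | 1 => simp [h1, w8]
        | n + 2 =>
          rw [hrec n, w8]
          push_cast
          rw [ih (n + 1) (by omega), ih n (by omega)]
    have inj8 : ∀ i < 8, ∀ j < 8,
        w8 (p : ZMod 8) (q : ZMod 8) i = w8 (p : ZMod 8) (q : ZMod 8) j → i = j := by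
      intro i hi j hj hij
      apply h3 i (by omega) j (by omega)
      have hc : (u i : ZMod 8) = (u j : ZMod 8) := by rw [cast8, cast8, hij]
      have h2 := (ZMod.intCast_eq_intCast_iff' _ _ 8).mp hc
      show u i % (2 ^ 3 : ℤ) = u j % (2 ^ 3 : ℤ)
      norm_num at h2 ⊢
      exact h2
    obtain ⟨hP, hQ⟩ := key8 _ _ inj8
    constructor
    · rcases hP with h' | h'
      · have h2 : ((p - 2 : ℤ) : ZMod 8) = 0 := by push_cast; rw [h']; ring
        have := (ZMod.intCast_zmod_eq_zero_iff_dvd _ 8).mp h2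
        omega
      · have h2 : ((p - 6 : ℤ) : ZMod 8) = 0 := by push_cast; rw [h']; ring
        have := (ZMod.intCast_zmod_eq_zero_iff_dvd _ 8).mp h2
        omega
    · rcases hQ with h' | h'
      · have h2 : ((q - 3 : ℤ) : ZMod 8) = 0 := by push_cast; rw [h']; ring
        have := (ZMod.intCast_zmod_eq_zero_iff_dvd _ 8).mp h2
        omega
      · have h2 : ((q - 7 : ℤ) : ZMod 8) = 0 := by push_cast; rw [h']; ring
        have := (ZMod.intCast_zmod_eq_zero_iff_dvd _ 8).mp h2
        omega
  · -- Reverse direction.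
    rintro ⟨hp, hq⟩
    obtain ⟨r, hr⟩ : ∃ r, p = 4 * r + 2 := ⟨p / 4, by omega⟩
    obtain ⟨w, hw⟩ : ∃ w, q = 4 * w + 3 := ⟨q / 4, by omega⟩
    subst hr
    subst hw
    have e2 : u 2 = 4 * r + 2 := by have := hrec 0; rw [h0, h1] at this; linarith
    -- the addition formula for Lucas sequences
    have L1 : ∀ n m : ℕ,
        u (m + n + 1) = u (m + 1) * u (n + 1) + (4 * w + 3) * (u m * u n) := by
      have main : ∀ n,
          (∀ m, u (m + n + 1) = u (m + 1) * u (n + 1) + (4 * w + 3) * (u m * u n)) ∧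
          (∀ m, u (m + n + 2) = u (m + 1) * u (n + 2) + (4 * w + 3) * (u m * u (n + 1))) := by
        intro n
        induction n with
        | zero =>
          constructor
          · intro m; simp [h0, h1]
          · intro m; rw [hrec m, e2, h1]; ring
        | succ n ih =>
          obtain ⟨A, B⟩ := ih
          constructor
          · intro m
            show u (m + n + 2) = u (m + 1) * u (n + 2) + (4 * w + 3) * (u m * u (n + 1))
            exact B m
          · intro m
            show u (m + n + 3) = u (m + 1) * u (n + 3) + (4 * w + 3) * (u m * u (n + 2))
            have C : u (m + n + 3) = (4 * r + 2) * u (m + n + 2) + (4 * w + 3) * u (m + n + 1) :=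
              hrec (m + n + 1)
            have D : u (n + 3) = (4 * r + 2) * u (n + 2) + (4 * w + 3) * u (n + 1) := hrec (n + 1)
            have E : u (n + 2) = (4 * r + 2) * u (n + 1) + (4 * w + 3) * u n := hrec n
            rw [C, A m, B m, D, E]
            ring
      exact fun n m => (main n).1 m
    -- consecutive terms have odd sum
    have odd : ∀ m : ℕ, ∃ t : ℤ, u m + u (m + 1) = 2 * t + 1 := by
      intro m
      induction m with
      | zero => exact ⟨0, by rw [h0, h1]; norm_num⟩
      | succ m ih =>
        obtain ⟨t, ht⟩ := ih
        refine ⟨(2 * r - 2 * w) * u (m + 1) + (4 * w + 3) * t + 2 * w + 1, ?_⟩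
        show u (m + 1) + u (m + 2) = _
        rw [hrec m]
        linear_combination (4 * w + 3) * ht
    -- 2-adic behaviour of u(2^k) and q·u(2^k - 1)
    have inv : ∀ k, 1 ≤ k → (∃ t : ℤ, u (2 ^ k) = 2 ^ k + 2 ^ (k + 1) * t) ∧
        (∃ s : ℤ, (4 * w + 3) * u (2 ^ k - 1) = 1 + 2 ^ k + 2 ^ (k + 1) * s) := by
      intro k hk
      induction k, hk using Nat.le_induction with
      | base =>
        constructor
        · exact ⟨r, by rw [pow_one]; rw [e2]; ring⟩
        · exact ⟨w, by norm_num [h1]; ring⟩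
      | succ k hk ih =>
        obtain ⟨⟨t, ht⟩, ⟨s, hs⟩⟩ := ih
        have hN : 1 ≤ 2 ^ k := Nat.one_le_two_pow
        have hNN : (2 : ℕ) ^ (k + 1) = 2 * 2 ^ k := by rw [pow_succ]; ring
        have X := L1 (2 ^ k) (2 ^ k - 1)
        rw [show 2 ^ k - 1 + 2 ^ k + 1 = 2 ^ (k + 1) by omega,
            show 2 ^ k - 1 + 1 = 2 ^ k by omega] at X
        have Y := hrec (2 ^ k - 1)
        rw [show 2 ^ k - 1 + 2 = 2 ^ k + 1 by omega,
            show 2 ^ k - 1 + 1 = 2 ^ k by omega] at Y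
        rw [Y] at X
        have Z := L1 (2 ^ k - 1) (2 ^ k - 1)
        rw [show 2 ^ k - 1 + (2 ^ k - 1) + 1 = 2 ^ (k + 1) - 1 by omega,
            show 2 ^ k - 1 + 1 = 2 ^ k by omega] at Z
        constructor
        · refine ⟨t + 2 ^ k * (1 + 2 * t) * (1 + r + t + 2 * r * t + s), ?_⟩
          linear_combination X + ((4 * r + 2) * (u (2 ^ k) + ((2 : ℤ) ^ k + 2 ^ (k + 1) * t))
              + 2 * (1 + (2 : ℤ) ^ k + 2 ^ (k + 1) * s)) * ht + 2 * u (2 ^ k) * hs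
        · refine ⟨s + 2 ^ k * (1 + 3 * t + 3 * t ^ 2 + s + s ^ 2 + w * (1 + 2 * t) ^ 2), ?_⟩
          linear_combination (4 * w + 3) * Z
              + (4 * w + 3) * (u (2 ^ k) + ((2 : ℤ) ^ k + 2 ^ (k + 1) * t)) * ht
              + ((4 * w + 3) * u (2 ^ k - 1) + (1 + (2 : ℤ) ^ k + 2 ^ (k + 1) * s)) * hs
    -- the key shift congruence: u(m + 2^k) ≡ u m + 2^k (mod 2^(k+1))
    have shift : ∀ k, 1 ≤ k → ∀ m : ℕ,
        ∃ c : ℤ, u (m + 2 ^ k) = u m + 2 ^ k + 2 ^ (k + 1) * c := by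
      intro k hk m
      have hN : 1 ≤ 2 ^ k := Nat.one_le_two_pow
      obtain ⟨⟨t, ht⟩, ⟨s, hs⟩⟩ := inv k hk
      obtain ⟨c', hc'⟩ := odd m
      have X := L1 (2 ^ k - 1) m
      rw [show m + (2 ^ k - 1) + 1 = m + 2 ^ k by omega,
          show 2 ^ k - 1 + 1 = 2 ^ k by omega] at X
      refine ⟨c' + t * u (m + 1) + s * u m, ?_⟩
      linear_combination X + u (m + 1) * ht + u m * hs + (2 : ℤ) ^ k * hc'
    -- injectivity modulo 2^k, by induction on k
    have inj : ∀ k, 1 ≤ k → ∀ i < 2 ^ k, ∀ j < 2 ^ k, ((2 : ℤ) ^ k ∣ u i - u j) → i = j := by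
      intro k hk
      induction k, hk using Nat.le_induction with
      | base =>
        intro i hi j hj hd
        interval_cases i <;> interval_cases j <;>
          first
            | rfl
            | (exfalso; rw [pow_one, h0, h1] at hd; omega)
      | succ k hk ih =>
        intro i hi j hj hd
        have hN : 1 ≤ 2 ^ k := Nat.one_le_two_pow
        have hNN : (2 : ℕ) ^ (k + 1) = 2 * 2 ^ k := by rw [pow_succ]; ring
        have dec : ∀ i, i < 2 ^ (k + 1) → ∃ (i₀ e : ℕ) (c : ℤ), i₀ < 2 ^ k ∧ e ≤ 1 ∧
            i = i₀ + e * 2 ^ k ∧ u i = u i₀ + (e : ℤ) * 2 ^ k + 2 ^ (k + 1) * c := by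
          intro i hi
          by_cases hc : i < 2 ^ k
          · exact ⟨i, 0, 0, hc, by omega, by omega, by push_cast; ring⟩
          · obtain ⟨c, hcc⟩ := shift k hk (i - 2 ^ k)
            rw [show i - 2 ^ k + 2 ^ k = i by omega] at hcc
            refine ⟨i - 2 ^ k, 1, c, by omega, le_refl 1, by omega, ?_⟩
            rw [hcc]; push_cast; ring
        obtain ⟨i₀, e, c, hi₀, he, hie, hui⟩ := dec i hi
        obtain ⟨j₀, f, c', hj₀, hf, hjf, huj⟩ := dec j hj
        obtain ⟨d, hd'⟩ := hd
        have key : u i₀ - u j₀ = (2 : ℤ) ^ k * (2 * d - e + f - 2 * c + 2 * c') := by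
          linear_combination hd' - hui + huj
        have hij : i₀ = j₀ := ih i₀ hi₀ j₀ hj₀ ⟨_, key⟩
        subst hij
        have h2 : ((2 : ℤ) ^ k) ≠ 0 := by positivity
        have hef : (e : ℤ) - f = 2 * (d - c + c') := by
          apply mul_left_cancel₀ h2
          linear_combination hd' - hui + huj
        have hef2 : e = f := by omega
        subst hef2
        omega
    intro k hk i hi j hj hcong
    exact inj k hk i hi j hj hcong.symm.dvd
end

section
/- Let p₀ be an odd integer. For all integers m > n ≥ 1, the 2-adic valuation of m·p₀^{m−1} − n·p₀^{n−1} equals the 2-adic valuation of m − n, i.e., ν₂(m·p₀^{m−1} − n·p₀^{n−1}) = ν₂(m − n). -/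
lemma aux_two_pow_dvd (a : ℤ) (ha : Odd a) (v : ℕ) :
    (2 : ℤ) ^ (v + 1) ∣ a ^ (2 ^ v) - 1 := by
  induction v with
  | zero =>
      obtain ⟨c, rfl⟩ := ha
      simp only [pow_zero, pow_one, zero_add]
      exact ⟨c, by ring⟩
  | succ v ih =>
      have h1 : a ^ 2 ^ (v + 1) - 1 = (a ^ 2 ^ v - 1) * (a ^ 2 ^ v + 1) := by
        rw [pow_succ, pow_mul]
        ring
      have h2 : (2 : ℤ) ∣ a ^ 2 ^ v + 1 := by
        have : Odd (a ^ 2 ^ v) := ha.pow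
        rcases this with ⟨c, hc⟩
        exact ⟨c + 1, by omega⟩
      rw [h1, pow_succ]
      exact mul_dvd_mul ih h2

lemma aux_lte (p₀ : ℤ) (hp₀ : Odd p₀) (k : ℕ) :
    (2 : ℤ) ^ (padicValNat 2 k + 1) ∣ p₀ ^ k - 1 := by
  set v := padicValNat 2 k with hv
  obtain ⟨t, ht⟩ : 2 ^ v ∣ k := pow_padicValNat_dvd
  have : p₀ ^ k - 1 = (p₀ ^ 2 ^ v) ^ t - 1 ^ t := by rw [← pow_mul, ← ht, one_pow]
  rw [this]
  exact (aux_two_pow_dvd p₀ hp₀ v).trans (sub_dvd_pow_sub_pow _ 1 t)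

/-- For odd `p₀` and integers `m > n ≥ 1`,
`ν₂(m·p₀^(m−1) − n·p₀^(n−1)) = ν₂(m − n)`. -/
theorem stmt8 (p₀ : ℤ) (hp₀ : Odd p₀) (m n : ℕ) (hn : 1 ≤ n) (hmn : n < m) :
    padicValInt 2 ((m : ℤ) * p₀ ^ (m - 1) - (n : ℤ) * p₀ ^ (n - 1)) =
      padicValNat 2 (m - n) := by
  set k := m - n with hk
  set v := padicValNat 2 k with hv
  have hk0 : k ≠ 0 := by omega
  have hp0 : p₀ ≠ 0 := by rintro rfl; simp [Int.odd_iff] at hp₀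
  have hpn : p₀ ^ (n - 1) ≠ 0 := pow_ne_zero _ hp0
  -- factorization
  have hfact : (m : ℤ) * p₀ ^ (m - 1) - (n : ℤ) * p₀ ^ (n - 1)
      = p₀ ^ (n - 1) * ((m : ℤ) * (p₀ ^ k - 1) + ((m : ℤ) - n)) := by
    have hm1 : m - 1 = (n - 1) + k := by omega
    rw [hm1, pow_add]
    ring
  set B : ℤ := (m : ℤ) * (p₀ ^ k - 1) + ((m : ℤ) - n) with hB
  have hdvdA : (2 : ℤ) ^ (v + 1) ∣ (m : ℤ) * (p₀ ^ k - 1) :=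
    Dvd.dvd.mul_left (aux_lte p₀ hp₀ k) _
  have hdvdv : (2 : ℤ) ^ v ∣ ((m : ℤ) - n) := by
    have : (2 : ℤ) ^ v ∣ (k : ℤ) := by
      exact_mod_cast Int.natCast_dvd_natCast.mpr (pow_padicValNat_dvd)
    have hcast : ((k : ℤ)) = (m : ℤ) - n := by
      rw [hk]; push_cast [Nat.cast_sub hmn.le]; ring
    rwa [hcast] at this
  have hndvd : ¬ (2 : ℤ) ^ (v + 1) ∣ ((m : ℤ) - n) := by
    intro h
    have hcast : ((k : ℤ)) = (m : ℤ) - n := by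
      rw [hk]; push_cast [Nat.cast_sub hmn.le]; ring
    rw [← hcast] at h
    have : (2 : ℕ) ^ (v + 1) ∣ k := by exact_mod_cast h
    exact pow_succ_padicValNat_not_dvd hk0 this
  have hdvdB : (2 : ℤ) ^ v ∣ B :=
    dvd_add ((pow_dvd_pow 2 (Nat.le_succ v)).trans hdvdA) hdvdv
  have hndvdB : ¬ (2 : ℤ) ^ (v + 1) ∣ B := by
    intro h
    have := dvd_sub h hdvdA
    have hBE : B - (m : ℤ) * (p₀ ^ k - 1) = (m : ℤ) - n := by rw [hB]; ring
    rw [hBE] at this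
    exact hndvd this
  have hB0 : B ≠ 0 := by
    intro h0
    exact hndvdB (h0 ▸ dvd_zero ((2:ℤ) ^ (v + 1)))
  have hvalB : padicValInt 2 B = v := by
    have h1 : v ≤ padicValInt 2 B := by
      have := (padicValInt_dvd_iff (p := 2) v B).mp hdvdB
      tauto
    have h2 : ¬ (v + 1 ≤ padicValInt 2 B) := by
      intro h
      exact hndvdB ((padicValInt_dvd_iff (p := 2) (v + 1) B).mpr (Or.inr h))
    omega
  have hodd : ¬ ((2 : ℤ) ∣ p₀ ^ (n - 1)) := by
    intro h
    have h2 := hp₀.pow (n := n - 1)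
    rw [Int.odd_iff] at h2
    omega
  rw [hfact, padicValInt.mul hpn hB0, padicValInt.eq_zero_of_not_dvd hodd, hvalB, zero_add]
end

section
/- Let p and q be integers with p ≡ 2 (mod 4), q ≡ 3 (mod 4), and p² + 4q ≠ 0, and let (u_n)_{n≥0} be the Lucas sequence defined by u_0 = 0, u_1 = 1, and u_{n+2} = p·u_{n+1} + q·u_n. Then for every n ≥ 1 the 2-adic valuation of u_n equals the 2-adic valuation of n, i.e., ν₂(u_n) = ν₂(n); in particular, for every k ≥ 1, 2^k divides u_n if and only if 2^k divides n, so the order of appearance of 2^k in (u_n) is z(2^k) = 2^k. -/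
/-! Reducing mod 4, the recurrence becomes `u (n + 2) ≡ 2 u (n + 1) - u n`, whose solution with
`u 0 = 0`, `u 1 = 1` is `u n ≡ n (mod 4)`; in particular `u n` is odd for odd `n`. The doubling
formula `u (2n) = u n * v n` with the companion sequence `v n ≡ 2 (mod 4)` then raises the
2-adic valuation by exactly one each time `n` is doubled. -/

theorem padicValInt_two_pow_mul_of_odd {c : ℤ} (hc : Odd c) (k : ℕ) :
    padicValInt 2 (2 ^ k * c) = k := by
  have hc₀ : c ≠ 0 := by rintro rfl; simp at hc
  have hc₂ : ¬((2 : ℕ) : ℤ) ∣ c := by simpa [← even_iff_two_dvd] using hc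
  rw [padicValInt.mul (by positivity) hc₀, padicValInt.eq_zero_of_not_dvd hc₂,
    show (2 : ℤ) ^ k = ((2 ^ k : ℕ) : ℤ) by push_cast; rfl, padicValInt.of_nat,
    padicValNat.prime_pow, add_zero]

theorem Nat.sInf_setOf_pos_and_dvd {N : ℕ} (hN : 0 < N) : sInf {n | 0 < n ∧ N ∣ n} = N :=
  le_antisymm (Nat.sInf_le ⟨hN, dvd_rfl⟩)
    (le_csInf ⟨N, hN, dvd_rfl⟩ fun _ ⟨hn, hNn⟩ => Nat.le_of_dvd hn hNn)

structure IsLucasSeq {R : Type*} [CommRing R] (p q : R) (u : ℕ → R) : Prop where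
  zero : u 0 = 0
  one : u 1 = 1
  add_two : ∀ n, u (n + 2) = p * u (n + 1) + q * u n

namespace IsLucasSeq

section CommRing

variable {R : Type*} [CommRing R] {p q : R} {u : ℕ → R}

theorem add_add_one (hu : IsLucasSeq p q u) (m n : ℕ) :
    u (m + n + 1) = u (m + 1) * u (n + 1) + q * u m * u n := by
  induction m generalizing n with
  | zero => simp [hu.zero, hu.one]
  | succ m ih =>
    rw [show m + 1 + n + 1 = m + (n + 1) + 1 by ring, ih, hu.add_two m, hu.add_two n]
    ring

theorem two_mul (hu : IsLucasSeq p q u) (n : ℕ) :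
    u (2 * n) = u n * (2 * u (n + 1) - p * u n) := by
  rcases n with _ | n
  · simp [hu.zero]
  · rw [show 2 * (n + 1) = n + 1 + n + 1 by ring, hu.add_add_one, hu.add_two]
    ring

end CommRing

variable {p q : ℤ} {u : ℕ → ℤ}

theorem modEq_four (hu : IsLucasSeq p q u) (hp : p ≡ 2 [ZMOD 4]) (hq : q ≡ 3 [ZMOD 4])
    (n : ℕ) : u n ≡ n [ZMOD 4] := by
  induction n using Nat.twoStepInduction with
  | zero => simp [hu.zero]
  | one => simp [hu.one]
  | more n ih₀ ih₁ =>
    calc u (n + 2) = p * u (n + 1) + q * u n := hu.add_two n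
      _ ≡ 2 * (n + 1 : ℕ) + 3 * n [ZMOD 4] := (hp.mul ih₁).add (hq.mul ih₀)
      _ ≡ (n + 2 : ℕ) [ZMOD 4] := Int.modEq_iff_dvd.mpr ⟨-n, by push_cast; ring⟩

/-- `2 * u (n + 1) - p * u n` is the companion sequence `v n = u (n + 1) + q * u (n - 1)`,
written so that no truncated subtraction occurs. -/
theorem companion_modEq_two (hu : IsLucasSeq p q u) (hp : p ≡ 2 [ZMOD 4])
    (hq : q ≡ 3 [ZMOD 4]) (n : ℕ) : 2 * u (n + 1) - p * u n ≡ 2 [ZMOD 4] :=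
  calc 2 * u (n + 1) - p * u n ≡ 2 * (n + 1 : ℕ) - 2 * n [ZMOD 4] :=
        ((hu.modEq_four hp hq (n + 1)).mul_left 2).sub (hp.mul (hu.modEq_four hp hq n))
    _ = 2 := by push_cast; ring

theorem exists_odd_of_two_pow_mul (hu : IsLucasSeq p q u) (hp : p ≡ 2 [ZMOD 4])
    (hq : q ≡ 3 [ZMOD 4]) (k : ℕ) {m : ℕ} (hm : Odd m) :
    ∃ c, Odd c ∧ u (2 ^ k * m) = 2 ^ k * c := by
  induction k with
  | zero =>
    have h : u m ≡ m [ZMOD 2] := (hu.modEq_four hp hq m).of_mul_left 2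
    exact ⟨u m, Int.odd_iff.mpr (h.eq.trans (Int.odd_iff.mp hm.natCast)), by simp⟩
  | succ k ih =>
    obtain ⟨c, hc, hck⟩ := ih
    obtain ⟨d, hd⟩ := Int.modEq_iff_dvd.mp (hu.companion_modEq_two hp hq (2 ^ k * m)).symm
    refine ⟨c * (2 * d + 1), hc.mul (odd_two_mul_add_one d), ?_⟩
    rw [pow_succ', mul_assoc, hu.two_mul]
    linear_combination (2 * u (2 ^ k * m + 1) - p * u (2 ^ k * m)) * hck + 2 ^ k * c * hd

theorem ne_zero (hu : IsLucasSeq p q u) (hp : p ≡ 2 [ZMOD 4]) (hq : q ≡ 3 [ZMOD 4])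
    {n : ℕ} (hn : n ≠ 0) : u n ≠ 0 := by
  obtain ⟨k, m, hm, rfl⟩ := Nat.exists_eq_two_pow_mul_odd hn
  obtain ⟨c, hc, hkm⟩ := hu.exists_odd_of_two_pow_mul hp hq k hm
  rw [hkm]
  exact mul_ne_zero (by positivity) (by rintro rfl; simp at hc)

theorem padicValInt_two (hu : IsLucasSeq p q u) (hp : p ≡ 2 [ZMOD 4]) (hq : q ≡ 3 [ZMOD 4])
    (n : ℕ) : padicValInt 2 (u n) = padicValNat 2 n := by
  rcases eq_or_ne n 0 with rfl | hn
  · simp [hu.zero]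
  obtain ⟨k, m, hm, rfl⟩ := Nat.exists_eq_two_pow_mul_odd hn
  obtain ⟨c, hc, hkm⟩ := hu.exists_odd_of_two_pow_mul hp hq k hm
  rw [hkm, padicValInt_two_pow_mul_of_odd hc, ← padicValInt.of_nat, Nat.cast_mul,
    Nat.cast_pow, Nat.cast_ofNat, padicValInt_two_pow_mul_of_odd hm.natCast]

theorem two_pow_dvd_iff (hu : IsLucasSeq p q u) (hp : p ≡ 2 [ZMOD 4]) (hq : q ≡ 3 [ZMOD 4])
    (k : ℕ) {n : ℕ} (hn : n ≠ 0) : (2 : ℤ) ^ k ∣ u n ↔ 2 ^ k ∣ n := by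
  have hval := padicValInt_dvd_iff (p := 2) k (u n)
  rw [Nat.cast_ofNat] at hval
  rw [hval, padicValNat_dvd_iff_le hn, hu.padicValInt_two hp hq,
    or_iff_right (hu.ne_zero hp hq hn)]

end IsLucasSeq

theorem stmt10_general (p q : ℤ) (hp : p % 4 = 2) (hq : q % 4 = 3)
    (u : ℕ → ℤ) (h0 : u 0 = 0) (h1 : u 1 = 1)
    (hrec : ∀ n : ℕ, u (n + 2) = p * u (n + 1) + q * u n) :
    (∀ n : ℕ, 1 ≤ n → padicValInt 2 (u n) = padicValNat 2 n) ∧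
    (∀ k : ℕ, 1 ≤ k → ∀ n : ℕ, 1 ≤ n → (((2 ^ k : ℤ) ∣ u n) ↔ (2 ^ k ∣ n))) ∧
    (∀ k : ℕ, 1 ≤ k → sInf {n : ℕ | 0 < n ∧ (2 ^ k : ℤ) ∣ u n} = 2 ^ k) := by
  have hu : IsLucasSeq p q u := ⟨h0, h1, hrec⟩
  have hdvd (k : ℕ) {n : ℕ} (hn : 0 < n) : (2 : ℤ) ^ k ∣ u n ↔ 2 ^ k ∣ n :=
    hu.two_pow_dvd_iff hp hq k hn.ne'
  refine ⟨fun n _ => hu.padicValInt_two hp hq n, fun k _ n hn => hdvd k hn, fun k _ => ?_⟩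
  have hset : {n : ℕ | 0 < n ∧ (2 ^ k : ℤ) ∣ u n} = {n | 0 < n ∧ 2 ^ k ∣ n} := by
    ext n
    exact and_congr_right (hdvd k)
  rw [hset, Nat.sInf_setOf_pos_and_dvd (by positivity)]

/-- If `p ≡ 2 (mod 4)`, `q ≡ 3 (mod 4)` and `p² + 4q ≠ 0`, then the Lucas
sequence `u` satisfies `ν₂(u n) = ν₂(n)` for every `n ≥ 1`; in particular for every
`k ≥ 1`, `2^k ∣ u n ↔ 2^k ∣ n`, so the order of appearance of `2^k` is `z(2^k) = 2^k`. -/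
theorem stmt10 (p q : ℤ) (hp : p % 4 = 2) (hq : q % 4 = 3) (hD : p ^ 2 + 4 * q ≠ 0)
    (u : ℕ → ℤ) (h0 : u 0 = 0) (h1 : u 1 = 1)
    (hrec : ∀ n : ℕ, u (n + 2) = p * u (n + 1) + q * u n) :
    (∀ n : ℕ, 1 ≤ n → padicValInt 2 (u n) = padicValNat 2 n) ∧
    (∀ k : ℕ, 1 ≤ k → ∀ n : ℕ, 1 ≤ n → (((2 ^ k : ℤ) ∣ u n) ↔ (2 ^ k ∣ n))) ∧
    (∀ k : ℕ, 1 ≤ k → sInf {n : ℕ | 0 < n ∧ (2 ^ k : ℤ) ∣ u n} = 2 ^ k) :=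
  stmt10_general p q hp hq u h0 h1 hrec
end

section
/- Let p and q be integers with p ≡ 2 (mod 4) and q ≡ 3 (mod 4), and let (u_n)_{n≥0} be the Lucas sequence defined by u_0 = 0, u_1 = 1, and u_{n+2} = p·u_{n+1} + q·u_n. Then for all integers k ≥ 1 and n ≥ 0, u_{n+2^k} ≡ u_n + 2^k (mod 2^{k+1}). -/
private lemma lucas_addf (p q : ℤ) (u : ℕ → ℤ) (h0 : u 0 = 0) (h1 : u 1 = 1)
    (hrec : ∀ n : ℕ, u (n + 2) = p * u (n + 1) + q * u n) :
    ∀ n m : ℕ, u (n + m + 1) = u (n + 1) * u (m + 1) + q * u n * u m := by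
  intro n
  induction n using Nat.twoStepInduction with
  | zero => intro m; simp [h0, h1]
  | one =>
    intro m
    have h2 : u 2 = p := by simpa [h0, h1] using hrec 0
    have e : 1 + m + 1 = m + 2 := by omega
    rw [e, hrec m, h2, h1]; ring
  | more n ih ih1 =>
    intro m
    have e : n + 2 + m + 1 = (n + m + 1) + 2 := by omega
    have e2 : n + m + 1 + 1 = (n + 1) + m + 1 := by omega
    have h3 : u (n + 3) = p * u (n + 2) + q * u (n + 1) := by
      have := hrec (n + 1); simpa using this
    rw [e, hrec (n + m + 1), e2, ih1 m, ih m, h3, show n+1+1 = n+2 from rfl, hrec n]; ring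

private lemma lucas_parity (p q : ℤ) (hp : p % 4 = 2) (hq : q % 4 = 3)
    (u : ℕ → ℤ) (h0 : u 0 = 0) (h1 : u 1 = 1)
    (hrec : ∀ n : ℕ, u (n + 2) = p * u (n + 1) + q * u n) :
    ∀ n : ℕ, ∃ c : ℤ, u n = n + 2 * c := by
  have hP : p = 2 + 4 * (p / 4) := by omega
  have hQ : q = 3 + 4 * (q / 4) := by omega
  intro n
  induction n using Nat.twoStepInduction with
  | zero => exact ⟨0, by simp [h0]⟩
  | one => exact ⟨0, by simp [h1]⟩
  | more n ih ih1 =>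
    obtain ⟨c, hc⟩ := ih
    refine ⟨(1 + 2 * (p/4)) * u (n+1) + n + 3*c + 2*(q/4)*(n:ℤ) + 4*(q/4)*c - 1, ?_⟩
    rw [hrec n, hc]
    push_cast
    linear_combination u (n+1) * hP + ((n:ℤ) + 2*c) * hQ

private lemma lucas_key (p q : ℤ) (hp : p % 4 = 2) (hq : q % 4 = 3)
    (u : ℕ → ℤ) (h0 : u 0 = 0) (h1 : u 1 = 1)
    (hrec : ∀ n : ℕ, u (n + 2) = p * u (n + 1) + q * u n) :
    ∀ k : ℕ, 1 ≤ k → ∃ s r : ℤ,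
      u (2 ^ k) = 2 ^ k + 2 ^ (k + 1) * s ∧
      q * u (2 ^ k - 1) = 1 + 2 ^ k + 2 ^ (k + 1) * r := by
  have hP : p = 2 + 4 * (p / 4) := by omega
  have hQ : q = 3 + 4 * (q / 4) := by omega
  intro k hk
  induction k, hk using Nat.le_induction with
  | base =>
    refine ⟨p / 4, q / 4, ?_, ?_⟩
    · have h2 : u 2 = p := by simpa [h0, h1] using hrec 0
      rw [show (2:ℕ)^1 = 2 from rfl, h2]; push_cast; linarith [hP]
    · rw [show (2:ℕ)^1 - 1 = 1 from rfl, h1]; push_cast; linarith [hQ]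
  | succ k hk ih =>
    obtain ⟨s, r, ha, hb⟩ := ih
    set P := p / 4 with hPdef
    set Q := q / 4 with hQdef
    have hM : 1 ≤ (2:ℕ)^k := Nat.one_le_two_pow
    have e1 : (2:ℕ)^k - 1 + 1 = 2^k := by omega
    have e2 : (2:ℕ)^k + (2^k - 1) + 1 = 2^(k+1) := by
      rw [pow_succ]; omega
    have e3 : (2:ℕ)^k - 1 + 2 = 2^k + 1 := by omega
    have e4 : (2:ℕ)^k - 1 + (2^k - 1) + 1 = 2^(k+1) - 1 := by
      rw [pow_succ]; omega
    -- u (2^k + 1)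
    have hc : u (2^k + 1) = p * u (2^k) + q * u (2^k - 1) := by
      have := hrec ((2:ℕ)^k - 1); rw [e3, e1] at this; exact this
    -- doubling formulas
    have ha' : u (2^(k+1)) = u (2^k) * (p * u (2^k) + 2 * (q * u (2^k - 1))) := by
      have := lucas_addf p q u h0 h1 hrec (2^k) (2^k - 1)
      rw [e2, e1, hc] at this; rw [this]; ring
    have hb' : q * u (2^(k+1) - 1) =
        q * (u (2^k) * u (2^k)) + (q * u (2^k - 1)) * (q * u (2^k - 1)) := by
      have := lucas_addf p q u h0 h1 hrec ((2:ℕ)^k - 1) ((2:ℕ)^k - 1)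
      rw [e4, e1] at this; rw [this]; ring
    set x : ℤ := 2^k with hx
    refine ⟨s + x * (1 + P + s + 2*P*s + r) + 2*x*s*(1 + P + s + 2*P*s + r),
            x * (1 + 3*s + 3*s^2 + r + r^2 + Q*(1+2*s)^2) + r, ?_, ?_⟩
    · rw [ha', ha, hb, hP, pow_succ, pow_succ, pow_succ]; ring
    · rw [hb', ha, hb, hQ, pow_succ, pow_succ, pow_succ]; ring

/-- If `p ≡ 2 (mod 4)` and `q ≡ 3 (mod 4)`, then the Lucas sequence `u`
satisfies `u (n + 2^k) ≡ u n + 2^k (mod 2^(k+1))` for all `k ≥ 1` and `n ≥ 0`. -/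
theorem stmt11 (p q : ℤ) (hp : p % 4 = 2) (hq : q % 4 = 3)
    (u : ℕ → ℤ) (h0 : u 0 = 0) (h1 : u 1 = 1)
    (hrec : ∀ n : ℕ, u (n + 2) = p * u (n + 1) + q * u n) :
    ∀ k : ℕ, 1 ≤ k → ∀ n : ℕ,
      u (n + 2 ^ k) ≡ u n + 2 ^ k [ZMOD (2 ^ (k + 1) : ℤ)] := by
  intro k hk n
  obtain ⟨s, r, ha, hb⟩ := lucas_key p q hp hq u h0 h1 hrec k hk
  have hM : 1 ≤ (2:ℕ)^k := Nat.one_le_two_pow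
  have e1 : (2:ℕ)^k - 1 + 1 = 2^k := by omega
  have e2 : n + ((2:ℕ)^k - 1) + 1 = n + 2^k := by omega
  have hx : u (n + 2^k) = u (n+1) * u (2^k) + u n * (q * u (2^k - 1)) := by
    have := lucas_addf p q u h0 h1 hrec n ((2:ℕ)^k - 1)
    rw [e2, e1] at this; rw [this]; ring
  obtain ⟨α, hα⟩ := lucas_parity p q hp hq u h0 h1 hrec (n+1)
  obtain ⟨β, hβ⟩ := lucas_parity p q hp hq u h0 h1 hrec n
  rw [Int.modEq_iff_dvd]
  refine ⟨-((n:ℤ) + α + β + s * u (n+1) + r * u n), ?_⟩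
  rw [hx, ha, hb, hα, hβ, pow_succ]
  push_cast
  ring
end

section
/- Let p, q, w_0, w_1 be integers with p ≡ 2 (mod 4), q ≡ 3 (mod 4), and w_0 + w_1 odd, and let (w_n)_{n≥0} be the binary recurrence defined by w_{n+2} = p·w_{n+1} + q·w_n for all n ≥ 0. Then for all integers k ≥ 1 and n ≥ 0, w_{n+2^k} ≡ w_n + 2^k (mod 2^{k+1}). -/
private lemma stmt12_key {n a b : ℤ} (x y a' b' : ℤ) (ha : a % n = a' % n)
    (hb : b % n = b' % n) : (a * x + b * y) % n = (a' * x + b' * y) % n := by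
  exact Int.ModEq.add (Int.ModEq.mul_right x ha) (Int.ModEq.mul_right y hb)

/-- Any integer sequence satisfying the recurrence with `p` even and `q` odd,
whose first two values are odd, is odd everywhere. -/
private lemma stmt12_odd_all (p q : ℤ) (hp : p % 2 = 0) (hq : q % 2 = 1)
    (u : ℕ → ℤ) (h0 : u 0 % 2 = 1) (h1 : u 1 % 2 = 1)
    (hrec : ∀ n : ℕ, u (n + 2) = p * u (n + 1) + q * u n) :
    ∀ n, u n % 2 = 1 := by
  have key : ∀ n, u n % 2 = 1 ∧ u (n + 1) % 2 = 1 := by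
    intro n
    induction n with
    | zero => exact ⟨h0, h1⟩
    | succ m ih =>
      refine ⟨ih.2, ?_⟩
      have h : u (m + 1 + 1) % 2 = (0 * u (m + 1) + 1 * u m) % 2 := by
        rw [show m + 1 + 1 = m + 2 from rfl, hrec m]
        exact stmt12_key _ _ 0 1 (by omega) (by omega)
      have := ih.1
      omega
  exact fun n => (key n).1

/-- Such a sequence with odd entries is `2`-periodic mod `4`. -/
private lemma stmt12_per4 (p q : ℤ) (hp : p % 4 = 2) (hq : q % 4 = 3)
    (u : ℕ → ℤ) (h0 : u 0 % 2 = 1) (h1 : u 1 % 2 = 1)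
    (hrec : ∀ n : ℕ, u (n + 2) = p * u (n + 1) + q * u n) :
    ∀ n m : ℕ, (u (n + 2 * m) - u n) % 4 = 0 := by
  have hodd : ∀ n, u n % 2 = 1 :=
    stmt12_odd_all p q (by omega) (by omega) u h0 h1 hrec
  have step : ∀ n, (u (n + 2) - u n) % 4 = 0 := by
    intro n
    have h : u (n + 2) % 4 = (2 * u (n + 1) + 3 * u n) % 4 := by
      rw [hrec n]
      exact stmt12_key _ _ 2 3 (by omega) (by omega)
    have o1 := hodd (n + 1)
    have o2 := hodd n
    omega
  intro n m
  induction m with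
  | zero => simp
  | succ j ih =>
    have h := step (n + 2 * j)
    have e : n + 2 * (j + 1) = n + 2 * j + 2 := by omega
    rw [e]
    omega

/-- If `p ≡ 2 (mod 4)`, `q ≡ 3 (mod 4)` and `w 0 + w 1` is odd, then the
binary recurrence `w` satisfies `w (n + 2^k) ≡ w n + 2^k (mod 2^(k+1))` for all `k ≥ 1`
and `n ≥ 0`. -/
theorem stmt12 (p q : ℤ) (hp : p % 4 = 2) (hq : q % 4 = 3)
    (w : ℕ → ℤ) (hodd : Odd (w 0 + w 1))
    (hrec : ∀ n : ℕ, w (n + 2) = p * w (n + 1) + q * w n) :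
    ∀ k : ℕ, 1 ≤ k → ∀ n : ℕ,
      w (n + 2 ^ k) ≡ w n + 2 ^ k [ZMOD (2 ^ (k + 1) : ℤ)] := by
  have h01 : (w 0 + w 1) % 2 = 1 := by obtain ⟨c, hc⟩ := hodd; omega
  -- the sequence of consecutive sums satisfies the same recurrence and is odd everywhere
  have hsum : ∀ n, (w n + w (n + 1)) % 2 = 1 := by
    have hrec' : ∀ n : ℕ, (fun m => w m + w (m + 1)) (n + 2)
        = p * (fun m => w m + w (m + 1)) (n + 1) + q * (fun m => w m + w (m + 1)) n := by
      intro n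
      show w (n + 2) + w (n + 3) = p * (w (n + 1) + w (n + 2)) + q * (w n + w (n + 1))
      have hr2 := hrec (n + 1)
      rw [show n + 1 + 2 = n + 3 from rfl, show n + 1 + 1 = n + 2 from rfl] at hr2
      linear_combination hrec n + hr2
    have h02 : w 2 = p * w 1 + q * w 0 := by have := hrec 0; norm_num at this; exact this
    have h1 : (w 1 + w 2) % 2 = 1 := by
      have h : w 2 % 2 = (0 * w 1 + 1 * w 0) % 2 := by
        rw [h02]; exact stmt12_key _ _ 0 1 (by omega) (by omega)
      omega
    exact stmt12_odd_all p q (by omega) (by omega) (fun m => w m + w (m + 1))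
      (by simpa using h01) (by simpa using h1) hrec'
  intro k hk
  induction k, hk using Nat.le_induction with
  | base =>
    intro n
    rw [Int.modEq_iff_dvd]
    rw [show (2:ℕ) ^ 1 = 2 from by norm_num, show ((2:ℤ) ^ (1 + 1)) = 4 from by norm_num,
      show ((2:ℤ) ^ 1) = 2 from by norm_num]
    have h : w (n + 2) % 4 = (2 * w (n + 1) + 3 * w n) % 4 := by
      rw [hrec n]; exact stmt12_key _ _ 2 3 (by omega) (by omega)
    have hs := hsum n
    omega
  | succ k hk ih =>
    intro n
    -- from the inductive hypothesis, build the quotient sequence u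
    have hd : ∀ m : ℕ, ∃ t : ℤ, w (m + 2 ^ k) - w m = 2 ^ k * (1 + 2 * t) := by
      intro m
      obtain ⟨t, ht⟩ := Int.modEq_iff_dvd.mp (ih m)
      rw [pow_succ] at ht
      exact ⟨-t, by linear_combination -ht⟩
    choose t ht using hd
    set u : ℕ → ℤ := fun m => 1 + 2 * t m with hu_def
    have hu : ∀ m : ℕ, w (m + 2 ^ k) - w m = 2 ^ k * u m := ht
    have huodd : ∀ m : ℕ, u m % 2 = 1 := fun m => by show (1 + 2 * t m) % 2 = 1; omega
    have hpow : (2:ℤ) ^ k ≠ 0 := pow_ne_zero _ two_ne_zero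
    have hurec : ∀ m : ℕ, u (m + 2) = p * u (m + 1) + q * u m := by
      intro m
      have key : (2:ℤ) ^ k * u (m + 2) = 2 ^ k * (p * u (m + 1) + q * u m) := by
        rw [← hu (m + 2)]
        have h1 := hu (m + 1)
        have h2 := hu m
        have hr1 := hrec m
        have hr2 := hrec (m + 2 ^ k)
        rw [show m + 2 ^ k + 2 = m + 2 + 2 ^ k from by omega,
          show m + 2 ^ k + 1 = m + 1 + 2 ^ k from by omega] at hr2
        rw [hr1, hr2]
        linear_combination p * h1 + q * h2
      exact mul_left_cancel₀ hpow key
    have hper := stmt12_per4 p q hp hq u (huodd 0) (huodd 1) hurec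
    -- now assemble
    rw [Int.modEq_iff_dvd]
    have e : n + 2 ^ (k + 1) = (n + 2 ^ k) + 2 ^ k := by rw [pow_succ]; omega
    rw [e]
    have h1 := hu n
    have h2 := hu (n + 2 ^ k)
    have hp4 : (u (n + 2 ^ k) - u n) % 4 = 0 := by
      have h := hper n (2 ^ (k - 1))
      rwa [show 2 * 2 ^ (k - 1) = 2 ^ k from by
        conv_rhs => rw [show k = k - 1 + 1 from by omega]
        rw [pow_succ]; ring] at h
    have ho := huodd n
    obtain ⟨s, hs⟩ : ∃ s : ℤ, u (n + 2 ^ k) + u n = 2 + 4 * s :=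
      ⟨(u (n + 2 ^ k) + u n - 2) / 4, by omega⟩
    have p1 : (2:ℤ) ^ (k + 1) = 2 ^ k * 2 := pow_succ 2 k
    have p2 : (2:ℤ) ^ (k + 1 + 1) = 2 ^ k * 4 := by rw [pow_succ, pow_succ]; ring
    refine ⟨-s, ?_⟩
    rw [p1, p2]
    linear_combination -h1 - h2 - (2:ℤ) ^ k * hs
end

section
/- Let q ≥ 5 be a prime, put q* = (−1)^{(q−1)/2}·q, and let u_q(j) = (3^j − q*·(−1)^j)/4 for j ≥ 1 (the Browkin–Sălăjan sequence for q). Then for every integer e ≥ 1 the terms u_q(1), u_q(2), …, u_q(2^e) are pairwise incongruent modulo 2^e; consequently the discriminator satisfies D_q(2^e) = 2^e for every e ≥ 1. -/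
/-- The Browkin–Sălăjan sequence for a prime `q ≥ 5`:
`u_q(j) = (3^j − q*·(−1)^j)/4` where `q* = (−1)^((q−1)/2)·q`. -/
def browkinSalajan (q : ℕ) (j : ℕ) : ℤ :=
  (3 ^ j - ((-1) ^ ((q - 1) / 2) * (q : ℤ)) * (-1) ^ j) / 4

/-- The discriminator `D_q(n)`: the smallest positive integer `m` such that
`u_q(1), …, u_q(n)` are pairwise incongruent modulo `m`. -/
noncomputable def browkinSalajanDisc (q : ℕ) (n : ℕ) : ℕ :=
  sInf {m : ℕ | 0 < m ∧
    ∀ i, 1 ≤ i → i ≤ n → ∀ j, 1 ≤ j → j ≤ n →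
      browkinSalajan q i ≡ browkinSalajan q j [ZMOD (m : ℤ)] → i = j}

/-!
Put `f(j) = 3^j − q*·(−1)^j = 4·u_q(j)`, so that `u_q(i) ≡ u_q(j) (mod 2^e)` means
`f(i) ≡ f(j) (mod 2^(e+2))`. Since `q* ≡ 1 (mod 4)`, `f(j) (mod 8)` is `1 − q*` or `3 + q*`
according to the parity of `j`, and these differ by `4`; so congruent terms have indices of the
same parity. Then `f(j) − f(i) = 3^i (3^d − 1)` with `d = j − i` even, and lifting the exponent
gives `v₂(3^d − 1) = v₂(d) + 2`, so `2^e ∣ d`, forcing `d = 0` when `|j − i| < 2^e`.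
Pigeonhole shows that no modulus below `n` separates `n` terms, whence `D_q(2^e) = 2^e`.
-/

lemma padicValNat_three_pow_sub_one {n : ℕ} (hn : n ≠ 0) (hev : Even n) :
    padicValNat 2 (3 ^ n - 1) = padicValNat 2 n + 2 := by
  have lte := padicValNat.pow_two_sub_one (x := 3) (by norm_num) (by norm_num) hn hev
  have h4 : padicValNat 2 4 = 2 := by simpa using padicValNat.prime_pow (p := 2) 2
  norm_num [h4] at lte
  omega

lemma two_pow_dvd_of_two_pow_add_two_dvd_three_pow_sub_one {k n : ℕ} (hev : Even n)
    (h : (2 : ℤ) ^ (k + 2) ∣ 3 ^ n - 1) : 2 ^ k ∣ n := by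
  rcases eq_or_ne n 0 with rfl | hn
  · exact dvd_zero _
  have hcast : ((3 ^ n - 1 : ℕ) : ℤ) = 3 ^ n - 1 := by
    push_cast [Nat.one_le_pow n 3 (by norm_num)]; rfl
  have hnat : 2 ^ (k + 2) ∣ 3 ^ n - 1 := by exact_mod_cast hcast ▸ h
  rw [padicValNat_dvd_iff_le (Nat.sub_ne_zero_of_lt (Nat.one_lt_pow hn (by norm_num))),
    padicValNat_three_pow_sub_one hn hev] at hnat
  exact (padicValNat_dvd_iff_le hn).mpr (by omega)

lemma three_pow_emod_eight (n : ℕ) : (3 : ℤ) ^ n % 8 = if Even n then 1 else 3 := by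
  induction n with
  | zero => rfl
  | succ n ih =>
    rw [pow_succ, Int.mul_emod, ih]
    by_cases hn : Even n <;> simp [hn, Nat.even_add_one]

lemma even_iff_even_of_three_pow_sub_modEq_eight {s : ℤ} (hs : s ≡ 1 [ZMOD 4]) {i j : ℕ}
    (h : 3 ^ i - s * (-1) ^ i ≡ 3 ^ j - s * (-1) ^ j [ZMOD 8]) : Even i ↔ Even j := by
  have hi := three_pow_emod_eight i
  have hj := three_pow_emod_eight j
  unfold Int.ModEq at h hs
  rw [neg_one_pow_eq_ite, neg_one_pow_eq_ite] at h
  split_ifs at hi hj h with hi' hj' hj' <;> simp only [hi', hj'] <;> omega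

lemma eq_of_three_pow_sub_modEq_of_le {s : ℤ} (hs : s ≡ 1 [ZMOD 4]) {e i j : ℕ} (he : 1 ≤ e)
    (hij : i ≤ j) (hlt : j < i + 2 ^ e)
    (h : 3 ^ i - s * (-1) ^ i ≡ 3 ^ j - s * (-1) ^ j [ZMOD 2 ^ (e + 2)]) : i = j := by
  obtain ⟨d, rfl⟩ := Nat.exists_eq_add_of_le hij
  have hpar := even_iff_even_of_three_pow_sub_modEq_eight hs
    (h.of_dvd (pow_dvd_pow (2 : ℤ) (show 3 ≤ e + 2 by omega)))
  have hd : Even d := by rw [Nat.even_add] at hpar; tauto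
  have hdiff : 3 ^ (i + d) - s * (-1) ^ (i + d) - (3 ^ i - s * (-1) ^ i) =
      (3 : ℤ) ^ i * (3 ^ d - 1) := by
    rw [pow_add, pow_add, hd.neg_one_pow]; ring
  have hdvd : (2 : ℤ) ^ (e + 2) ∣ 3 ^ d - 1 := by
    have hprod := h.dvd
    rw [hdiff] at hprod
    exact (show IsCoprime (2 : ℤ) 3 by norm_num).pow.dvd_of_dvd_mul_left hprod
  have hd0 : d = 0 :=
    Nat.eq_zero_of_dvd_of_lt (two_pow_dvd_of_two_pow_add_two_dvd_three_pow_sub_one hd hdvd)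
      (by omega)
  omega

lemma eq_of_three_pow_sub_modEq {s : ℤ} (hs : s ≡ 1 [ZMOD 4]) {e i j : ℕ} (he : 1 ≤ e)
    (hi : 1 ≤ i) (hi' : i ≤ 2 ^ e) (hj : 1 ≤ j) (hj' : j ≤ 2 ^ e)
    (h : 3 ^ i - s * (-1) ^ i ≡ 3 ^ j - s * (-1) ^ j [ZMOD 2 ^ (e + 2)]) : i = j := by
  rcases le_total i j with hij | hji
  · exact eq_of_three_pow_sub_modEq_of_le hs he hij (by omega) h
  · exact (eq_of_three_pow_sub_modEq_of_le hs he hji (by omega) h.symm).symm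

def qStar (q : ℕ) : ℤ := (-1) ^ ((q - 1) / 2) * q

lemma qStar_modEq_one {q : ℕ} (hq : Odd q) : qStar q ≡ 1 [ZMOD 4] := by
  obtain ⟨k, rfl⟩ := hq
  have hk : (2 * k + 1 - 1) / 2 = k := by omega
  unfold qStar Int.ModEq
  rw [hk]
  obtain ⟨m, rfl | rfl⟩ := Nat.even_or_odd' k <;> simp [pow_succ, pow_mul] <;> omega

lemma four_mul_browkinSalajan {q : ℕ} (hq : Odd q) (j : ℕ) :
    4 * browkinSalajan q j = 3 ^ j - qStar q * (-1) ^ j := by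
  have h : qStar q * (-1) ^ j ≡ 3 ^ j [ZMOD 4] :=
    calc qStar q * (-1) ^ j ≡ 1 * (-1) ^ j [ZMOD 4] := (qStar_modEq_one hq).mul_right _
      _ = (-1) ^ j := one_mul _
      _ ≡ 3 ^ j [ZMOD 4] := (show (-1 : ℤ) ≡ 3 [ZMOD 4] by decide).pow j
  exact Int.mul_ediv_cancel' h.dvd

lemma browkinSalajan_modEq_iff {q : ℕ} (hq : Odd q) {e i j : ℕ} :
    browkinSalajan q i ≡ browkinSalajan q j [ZMOD 2 ^ e] ↔
      3 ^ i - qStar q * (-1) ^ i ≡ 3 ^ j - qStar q * (-1) ^ j [ZMOD 2 ^ (e + 2)] := by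
  rw [← Int.ModEq.mul_left_cancel_iff' (c := 4) four_ne_zero, four_mul_browkinSalajan hq,
    four_mul_browkinSalajan hq, show (2 : ℤ) ^ (e + 2) = 4 * 2 ^ e by ring]

lemma browkinSalajanDisc_eq_self {q n : ℕ} (hn : 0 < n)
    (h : ∀ i, 1 ≤ i → i ≤ n → ∀ j, 1 ≤ j → j ≤ n →
      browkinSalajan q i ≡ browkinSalajan q j [ZMOD (n : ℤ)] → i = j) :
    browkinSalajanDisc q n = n := by
  refine le_antisymm (Nat.sInf_le ⟨hn, h⟩) (le_csInf ⟨n, hn, h⟩ ?_)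
  rintro m ⟨hm, hinj⟩
  have : NeZero m := ⟨hm.ne'⟩
  simpa using Finset.card_le_card_of_injOn (s := Finset.Icc 1 n) (t := Finset.univ)
    (fun i => (browkinSalajan q i : ZMod m)) (fun _ _ => Finset.mem_coe.mpr (Finset.mem_univ _))
    (fun i hi j hj hij => by
      simp only [Finset.coe_Icc, Set.mem_Icc] at hi hj
      exact hinj i hi.1 hi.2 j hj.1 hj.2 ((ZMod.intCast_eq_intCast_iff _ _ _).mp hij))

/-- For every prime `q ≥ 5` and every `e ≥ 1`, the terms
`u_q(1), …, u_q(2^e)` are pairwise incongruent modulo `2^e`; consequently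
`D_q(2^e) = 2^e`. -/
theorem stmt16 (q : ℕ) (hq : q.Prime) (hq5 : 5 ≤ q) :
    ∀ e : ℕ, 1 ≤ e →
      (∀ i, 1 ≤ i → i ≤ 2 ^ e → ∀ j, 1 ≤ j → j ≤ 2 ^ e →
        browkinSalajan q i ≡ browkinSalajan q j [ZMOD (2 ^ e : ℤ)] → i = j) ∧
      browkinSalajanDisc q (2 ^ e) = 2 ^ e := by
  intro e he
  have hodd : Odd q := hq.odd_of_ne_two (by omega)
  have hinj : ∀ i, 1 ≤ i → i ≤ 2 ^ e → ∀ j, 1 ≤ j → j ≤ 2 ^ e →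
      browkinSalajan q i ≡ browkinSalajan q j [ZMOD (2 ^ e : ℤ)] → i = j :=
    fun i hi hi' j hj hj' h => eq_of_three_pow_sub_modEq (qStar_modEq_one hodd) he hi hi' hj hj'
      ((browkinSalajan_modEq_iff hodd).mp h)
  exact ⟨hinj, browkinSalajanDisc_eq_self (by positivity) (by exact_mod_cast hinj)⟩
end

section
/- Let p and q be integers with p ≡ 3 (mod 4) and q ≡ 1 (mod 4), and let (u_n)_{n≥0} be the Lucas sequence defined by u_0 = 0, u_1 = 1, and u_{n+2} = p·u_{n+1} + q·u_n. Then the eight terms u_0, u_1, …, u_7 do not represent all residue classes modulo 8; i.e., there exist indices 0 ≤ i < j ≤ 7 with u_i ≡ u_j (mod 8). -/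
lemma stmt17_aux (P Q : ZMod 8) (v : ℕ → ZMod 8) (h0 : v 0 = 0) (h1 : v 1 = 1)
    (hr : ∀ n, v (n + 2) = P * v (n + 1) + Q * v n)
    (hP : P = 3 ∨ P = 7) (hQ : Q = 1 ∨ Q = 5) :
    ∃ i j : ℕ, i < j ∧ j ≤ 7 ∧ v i = v j := by
  have e2 : v 2 = P := by rw [hr 0, h0, h1]; ring
  have e3 : v 3 = P * P + Q := by rw [hr 1, e2, h1]; ring
  have e4 : v 4 = P * (P * P + Q) + Q * P := by rw [hr 2, e3, e2]
  have e5 : v 5 = P * (P * (P * P + Q) + Q * P) + Q * (P * P + Q) := by rw [hr 3, e4, e3]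
  have e6 : v 6 = P * (P * (P * (P * P + Q) + Q * P) + Q * (P * P + Q))
      + Q * (P * (P * P + Q) + Q * P) := by rw [hr 4, e5, e4]
  have e7 : v 7 = P * (P * (P * (P * (P * P + Q) + Q * P) + Q * (P * P + Q))
      + Q * (P * (P * P + Q) + Q * P))
      + Q * (P * (P * (P * P + Q) + Q * P) + Q * (P * P + Q)) := by rw [hr 5, e6, e5]
  rcases hP with hP | hP <;> rcases hQ with hQ | hQ <;> subst hP <;> subst hQ
  · exact ⟨5, 7, by norm_num, le_refl 7, by rw [e5, e7]; decide⟩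
  · exact ⟨4, 5, by norm_num, by norm_num, by rw [e4, e5]; decide⟩
  · exact ⟨4, 5, by norm_num, by norm_num, by rw [e4, e5]; decide⟩
  · exact ⟨1, 5, by norm_num, by norm_num, by rw [h1, e5]; decide⟩

/-- If `p ≡ 3 (mod 4)` and `q ≡ 1 (mod 4)`, then the first eight terms of
the Lucas sequence `u` do not cover all residue classes modulo `8`: there are indices
`0 ≤ i < j ≤ 7` with `u i ≡ u j (mod 8)`. -/
theorem stmt17 (p q : ℤ) (hp : p % 4 = 3) (hq : q % 4 = 1)
    (u : ℕ → ℤ) (h0 : u 0 = 0) (h1 : u 1 = 1)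
    (hrec : ∀ n : ℕ, u (n + 2) = p * u (n + 1) + q * u n) :
    ∃ i j : ℕ, i < j ∧ j ≤ 7 ∧ u i ≡ u j [ZMOD (8 : ℤ)] := by
  have hp8 : p % 8 = 3 ∨ p % 8 = 7 := by omega
  have hq8 : q % 8 = 1 ∨ q % 8 = 5 := by omega
  have hP : (p : ZMod 8) = 3 ∨ (p : ZMod 8) = 7 := by
    rcases hp8 with h | h
    · left
      have : p ≡ 3 [ZMOD (8 : ℤ)] := by unfold Int.ModEq; omega
      have := (ZMod.intCast_eq_intCast_iff _ _ _).mpr this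
      push_cast at this; exact this
    · right
      have : p ≡ 7 [ZMOD (8 : ℤ)] := by unfold Int.ModEq; omega
      have := (ZMod.intCast_eq_intCast_iff _ _ _).mpr this
      push_cast at this; exact this
  have hQ : (q : ZMod 8) = 1 ∨ (q : ZMod 8) = 5 := by
    rcases hq8 with h | h
    · left
      have : q ≡ 1 [ZMOD (8 : ℤ)] := by unfold Int.ModEq; omega
      have := (ZMod.intCast_eq_intCast_iff _ _ _).mpr this
      push_cast at this; exact this
    · right
      have : q ≡ 5 [ZMOD (8 : ℤ)] := by unfold Int.ModEq; omega
      have := (ZMod.intCast_eq_intCast_iff _ _ _).mpr this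
      push_cast at this; exact this
  obtain ⟨i, j, hij, hj, h⟩ := stmt17_aux (p : ZMod 8) (q : ZMod 8)
    (fun n => ((u n : ZMod 8)))
    (show ((u 0 : ZMod 8)) = 0 by rw [h0]; norm_num) (show ((u 1 : ZMod 8)) = 1 by rw [h1]; norm_num)
    (fun n => show ((u (n+2) : ZMod 8)) = _ by rw [hrec]; push_cast; ring) hP hQ
  exact ⟨i, j, hij, hj, (ZMod.intCast_eq_intCast_iff _ _ _).mp h⟩
end
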